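/- arXiv:1602.05632 — 3 statements merged into one kernel-verified Lean document; each statement's English description precedes it below -/
import Mathlib

section
/- Consider states x_i(t) ∈ ℝ for each load bus i ∈ L and y_i(t) ∈ ℝ for every bus i ∈ {1,…,N}, evolving according to: for i ∈ L, τ·ẋ_i = Q_i(1 − x_i) − P_i y_i − Σ_{j∈L} d_{ij} x_j + Σ_{j=1}^N D_{ij} y_j and τ·ẏ_i = Q_i y_i − P_i x_i − Σ_{j∈L} D_{ij} x_j − Σ_{j=1}^N d_{ij} y_j; and for i ∈ 𝒢, τ·ẏ_i = Q_i y_i − Σ_{j∈L} D_{ij} x_j − Σ_{j=1}^N d_{ij} y_j. This system is affine in (x,y): write it as τ·(ẋ,ẏ) = −M(x,y) + c for the corresponding real (n+N)×(n+N) matrix M and vector c. Assume: (i) every complex eigenvalue of M is either 0 or has strictly positive real part; (ii) 0 is an eigenvalue of M of algebraic multiplicity one whose eigenspace is spanned by the vector (0_n, 1_N) (zeros in the n x-coordinates, ones in the N y-coordinates); (iii) there exists (x*, y*) ∈ ℝ^n × ℝ^N with M(x*, y*) = c. Then x* is the same for every solution (x*,y*) of M(x*,y*) = c, and for every initial condition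 (x(0), y(0)) ∈ ℝ^n × ℝ^N, every solution of the ODE system satisfies lim_{t→∞} x_i(t) = x*_i for each i ∈ L. -/
/-!
Writing `Z = (x, y) - (x*, y*)` for the deviation from a steady state, the system becomes the linear
ODE `τ Ż = -M Z`, so `Z t = exp (-(t/τ) M) Z 0`. Over `ℂ`, split `Z 0` along the generalized
eigenspaces of `M`: on an eigenvalue `μ` with `Re μ > 0` the flow is `e^{-sμ}` times a polynomial
in `s` and decays, while algebraic multiplicity one forces the generalized `0`-eigenspace to be the
kernel, on which the flow is constant. Hence `Z t` converges to a vector of `ker M`, i.e. a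
multiple of `(0, 1)`, whose `x`-components vanish. The same kernel description gives uniqueness
of `x*`.
-/

open Filter Topology NormedSpace Module

theorem Module.End.maxGenEigenspace_le_eigenspace_of_finrank_le_one {K V : Type*} [Field K]
    [AddCommGroup V] [Module K V] [FiniteDimensional K V] (f : End K V) (μ : K)
    (h : finrank K (f.maxGenEigenspace μ) ≤ 1) : f.maxGenEigenspace μ ≤ f.eigenspace μ := by
  intro u hu
  by_cases hu0 : u = 0
  · simp [hu0]
  have hspan : f.maxGenEigenspace μ = K ∙ u :=
    (Submodule.eq_of_le_of_finrank_le ((Submodule.span_singleton_le_iff_mem _ _).mpr hu)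
      (by rwa [finrank_span_singleton hu0])).symm
  have hcomm : Commute f (f - μ • 1) :=
    (Commute.refl f).sub_right ((Commute.one_right f).smul_right μ)
  have hmem : (f - μ • 1) u ∈ K ∙ u := hspan ▸ mapsTo_maxGenEigenspace_of_comm hcomm μ hu
  obtain ⟨a, ha⟩ := Submodule.mem_span_singleton.mp hmem
  have hpow : ∀ j : ℕ, ((f - μ • 1) ^ j) u = a ^ j • u := by
    intro j
    induction j with
    | zero => simp
    | succ j ih => rw [pow_succ, mul_apply, ← ha, map_smul, ih, smul_smul, pow_succ']
  obtain ⟨k, hk⟩ := (mem_maxGenEigenspace _ _ _).mp hu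
  rw [hpow, smul_eq_zero, or_iff_left hu0] at hk
  rw [eq_zero_of_pow_eq_zero hk, zero_smul] at ha
  rw [mem_eigenspace_iff, ← sub_eq_zero]
  simpa using ha.symm

theorem exp_apply_eq_sum_of_pow_apply_eq_zero {𝕂 F : Type*} [RCLike 𝕂] [NormedAddCommGroup F]
    [NormedSpace 𝕂 F] [CompleteSpace F] (A : F →L[𝕂] F) {v : F} {K : ℕ} (h : (A ^ K) v = 0) :
    exp A v = ∑ k ∈ Finset.range K, (k.factorial : 𝕂)⁻¹ • (A ^ k) v := by
  have hsum := (exp_series_hasSum_exp' (𝕂 := 𝕂) A).mapL (ContinuousLinearMap.apply 𝕂 F v)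
  refine hsum.unique (hasSum_sum_of_ne_finset_zero fun k hk => ?_)
  obtain ⟨j, rfl⟩ := Nat.exists_eq_add_of_le' (not_lt.mp (Finset.mem_range.not.mp hk))
  simp [pow_add, h]

theorem Complex.tendsto_exp_neg_mul_mul_pow_atTop {μ : ℂ} (hμ : 0 < μ.re) (k : ℕ) :
    Tendsto (fun s : ℝ => Complex.exp (-s * μ) * (-s : ℂ) ^ k) atTop (𝓝 0) := by
  refine squeeze_zero_norm' ?_ (by
    simpa using tendsto_rpow_mul_exp_neg_mul_atTop_nhds_zero k μ.re hμ)
  filter_upwards [eventually_ge_atTop 0] with s hs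
  rw [norm_mul, norm_exp, norm_pow, norm_neg, norm_real, Real.norm_of_nonneg hs]
  simp [mul_comm]

section ComplexExp

variable {E : Type*} [NormedAddCommGroup E] [NormedSpace ℂ E] [CompleteSpace E]

theorem exp_smul_apply_eq_sum_of_pow_sub_apply_eq_zero (A : E →L[ℂ] E) (c μ : ℂ) {u : E}
    {K : ℕ} (h : ((A - μ • 1) ^ K) u = 0) :
    exp (c • A) u = ∑ k ∈ Finset.range K,
      (Complex.exp (c * μ) * c ^ k / k.factorial) • ((A - μ • 1) ^ k) u := by
  -- `exp_add_of_commute` is stated for normed `ℚ`-algebras, which is not an instance here.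
  let : NormedAlgebra ℚ (E →L[ℂ] E) := NormedAlgebra.restrictScalars ℚ ℂ _
  have hsplit : c • A = algebraMap ℂ (E →L[ℂ] E) (c * μ) + c • (A - μ • 1) := by
    rw [Algebra.algebraMap_eq_smul_one]; module
  have hnil : ((c • (A - μ • 1)) ^ K) u = 0 := by
    rw [smul_pow, smul_apply, h, smul_zero]
  rw [hsplit, exp_add_of_commute (Algebra.commutes _ _), ← algebraMap_exp_comm,
    mul_apply_eq_comp, exp_apply_eq_sum_of_pow_apply_eq_zero _ hnil,
    Algebra.algebraMap_eq_smul_one, smul_apply, one_apply_eq_self, Finset.smul_sum]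
  refine Finset.sum_congr rfl fun k _ => ?_
  rw [smul_pow, smul_apply, smul_smul, smul_smul, ← Complex.exp_eq_exp_ℂ]
  congr 1
  ring

theorem exp_smul_apply_of_apply_eq_zero (A : E →L[ℂ] E) (c : ℂ) {u : E} (h : A u = 0) :
    exp (c • A) u = u := by
  simpa using exp_smul_apply_eq_sum_of_pow_sub_apply_eq_zero A c 0 (K := 1) (by simpa using h)

theorem tendsto_exp_neg_smul_apply_of_mem_maxGenEigenspace (A : E →L[ℂ] E) {μ : ℂ}
    (hμ : 0 < μ.re) {u : E} (hu : u ∈ End.maxGenEigenspace (A : End ℂ E) μ) :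
    Tendsto (fun s : ℝ => exp ((-s : ℂ) • A) u) atTop (𝓝 0) := by
  obtain ⟨K, hK⟩ := (End.mem_maxGenEigenspace _ _ _).mp hu
  have hK' : ((A - μ • 1) ^ K) u = 0 := by
    rw [← ContinuousLinearMap.coe_coe, ContinuousLinearMap.toLinearMap_pow]
    simpa using hK
  simp only [exp_smul_apply_eq_sum_of_pow_sub_apply_eq_zero A _ μ hK']
  rw [← Finset.sum_const_zero (s := Finset.range K)]
  refine tendsto_finsetSum _ fun k _ => ?_
  simpa using ((Complex.tendsto_exp_neg_mul_mul_pow_atTop hμ k).div_const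
    (k.factorial : ℂ)).smul_const (((A - μ • 1) ^ k) u)

theorem exists_mem_ker_tendsto_exp_neg_smul_apply [FiniteDimensional ℂ E] (A : E →L[ℂ] E)
    (hspec : ∀ μ : ℂ, End.HasEigenvalue (A : End ℂ E) μ → μ = 0 ∨ 0 < μ.re)
    (hsemisimple : End.maxGenEigenspace (A : End ℂ E) 0 ≤ LinearMap.ker (A : End ℂ E))
    (w : E) :
    ∃ v ∈ LinearMap.ker (A : End ℂ E),
      Tendsto (fun s : ℝ => exp ((-s : ℂ) • A) w) atTop (𝓝 v) := by
  have hw : w ∈ ⨆ μ : ℂ, End.maxGenEigenspace (A : End ℂ E) μ := by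
    simp [End.iSup_maxGenEigenspace_eq_top]
  refine Submodule.iSup_induction _ (motive := fun u => ∃ v ∈ LinearMap.ker (A : End ℂ E),
      Tendsto (fun s : ℝ => exp ((-s : ℂ) • A) u) atTop (𝓝 v)) hw (fun μ u hu => ?_)
    ⟨0, zero_mem _, by simp only [map_zero]; exact tendsto_const_nhds⟩
    fun u₁ u₂ ⟨v₁, hv₁, h₁⟩ ⟨v₂, hv₂, h₂⟩ =>
      ⟨v₁ + v₂, add_mem hv₁ hv₂, by simpa only [map_add] using h₁.add h₂⟩
  by_cases hu0 : u = 0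
  · exact ⟨0, zero_mem _, by simp only [hu0, map_zero]; exact tendsto_const_nhds⟩
  have hμ : End.HasEigenvalue (A : End ℂ E) μ :=
    End.HasUnifEigenvalue.lt zero_lt_one fun hbot => hu0 ((Submodule.mem_bot ℂ).mp (hbot ▸ hu))
  rcases hspec μ hμ with rfl | hre
  · have hker : A u = 0 := hsemisimple hu
    exact ⟨u, hker, by
      simp only [exp_smul_apply_of_apply_eq_zero A _ hker]; exact tendsto_const_nhds⟩
  · exact ⟨0, zero_mem _, tendsto_exp_neg_smul_apply_of_mem_maxGenEigenspace A hre hu⟩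

theorem eq_exp_smul_apply_of_hasDerivWithinAt (B : E →L[ℂ] E) {Z : ℝ → E}
    (hZ : ∀ t, 0 ≤ t → HasDerivWithinAt Z (B (Z t)) (Set.Ici 0) t) {t : ℝ} (ht : 0 ≤ t) :
    Z t = exp ((t : ℂ) • B) (Z 0) := by
  have hexp : ∀ r : ℝ, HasDerivAt (fun r : ℝ => exp ((r : ℂ) • B) (Z 0))
      (B (exp ((r : ℂ) • B) (Z 0))) r := by
    intro r
    have h := (hasDerivAt_exp_smul_const' B (r : ℂ)).clm_apply (hasDerivAt_const (r : ℂ) (Z 0))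
    simpa [Function.comp_def] using
      (h.hasFDerivAt.restrictScalars ℝ).comp_hasDerivAt r Complex.ofRealCLM.hasDerivAt
  refine ODE_solution_unique_of_mem_Icc_right (v := fun _ => B) (s := fun _ => Set.univ)
    (fun _ _ => (B.restrictScalars ℝ).lipschitz.lipschitzOnWith) ?_ ?_ (fun _ _ => trivial)
    (fun r _ => (hexp r).continuousAt.continuousWithinAt) (fun r _ => (hexp r).hasDerivWithinAt)
    (fun _ _ => trivial) (by simp) ⟨ht, le_rfl⟩
  · exact fun r hr => ((hZ r hr.1).continuousWithinAt).mono fun _ h => h.1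
  · exact fun r hr => (hZ r hr.1).mono (Set.Ici_subset_Ici.mpr hr.1)

end ComplexExp

namespace Matrix

variable {ι : Type*} [Fintype ι]

noncomputable def complexCLM (M : Matrix ι ι ℝ) : (ι → ℂ) →L[ℂ] (ι → ℂ) :=
  LinearMap.toContinuousLinearMap (M.map (algebraMap ℝ ℂ)).mulVecLin

theorem complexCLM_apply_ofReal (M : Matrix ι ι ℝ) (v : ι → ℝ) :
    M.complexCLM (fun i => (v i : ℂ)) = fun i => ((M *ᵥ v) i : ℂ) :=
  funext fun i => (RingHom.map_mulVec (algebraMap ℝ ℂ) M v i).symm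

theorem re_mem_ker_of_mem_ker_complexCLM (M : Matrix ι ι ℝ) {v : ι → ℂ}
    (hv : v ∈ LinearMap.ker (M.complexCLM : End ℂ (ι → ℂ))) :
    (fun i => (v i).re) ∈ LinearMap.ker M.mulVecLin := by
  have hv0 : M.map (algebraMap ℝ ℂ) *ᵥ v = 0 := hv
  ext i
  simpa [mulVec, dotProduct, Complex.re_sum] using congrArg (fun w => (w i).re) hv0

theorem charpoly_complexCLM [DecidableEq ι] (M : Matrix ι ι ℝ) :
    LinearMap.charpoly (M.complexCLM : End ℂ (ι → ℂ)) = M.charpoly.map (algebraMap ℝ ℂ) := by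
  simp only [complexCLM, LinearMap.coe_toContinuousLinearMap, charpoly_mulVecLin, charpoly_map]

theorem ofReal_eq_exp_smul_complexCLM_apply (M : Matrix ι ι ℝ) {τ : ℝ} (hτ : τ ≠ 0)
    {Z Z' : ℝ → ι → ℝ} (hZ : ∀ t, 0 ≤ t → HasDerivWithinAt Z (Z' t) (Set.Ici 0) t)
    (hZ' : ∀ t, 0 ≤ t → τ • Z' t = -(M *ᵥ Z t)) {t : ℝ} (ht : 0 ≤ t) :
    (fun i => (Z t i : ℂ)) = exp ((-(t / τ : ℝ) : ℂ) • M.complexCLM) fun i => (Z 0 i : ℂ) := by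
  have hZc : ∀ t, 0 ≤ t → HasDerivWithinAt (fun t i => (Z t i : ℂ))
      ((((-τ⁻¹ : ℝ) : ℂ) • M.complexCLM) fun i => (Z t i : ℂ)) (Set.Ici 0) t := by
    intro t ht
    refine hasDerivWithinAt_pi.mpr fun i =>
      (hasDerivWithinAt_pi.mp (hZ t ht) i).ofReal_comp.congr_deriv ?_
    have hZ'i : Z' t i = -τ⁻¹ * (M *ᵥ Z t) i := by
      have := congrFun (hZ' t ht) i
      simp only [Pi.smul_apply, smul_eq_mul, Pi.neg_apply] at this
      field_simp
      linarith
    simp [complexCLM_apply_ofReal, hZ'i]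
  rw [eq_exp_smul_apply_of_hasDerivWithinAt _ hZc ht, smul_smul]
  congr 3
  push_cast
  ring

theorem exists_mem_ker_tendsto_of_hasDerivWithinAt [DecidableEq ι] (M : Matrix ι ι ℝ)
    (hspec : ∀ μ : ℂ, (M.charpoly.map (algebraMap ℝ ℂ)).IsRoot μ → μ = 0 ∨ 0 < μ.re)
    (hmult : (M.charpoly.map (algebraMap ℝ ℂ)).rootMultiplicity 0 ≤ 1)
    {τ : ℝ} (hτ : 0 < τ) {Z Z' : ℝ → ι → ℝ}
    (hZ : ∀ t, 0 ≤ t → HasDerivWithinAt Z (Z' t) (Set.Ici 0) t)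
    (hZ' : ∀ t, 0 ≤ t → τ • Z' t = -(M *ᵥ Z t)) :
    ∃ w ∈ LinearMap.ker M.mulVecLin, Tendsto Z atTop (𝓝 w) := by
  have hsemisimple : End.maxGenEigenspace (M.complexCLM : End ℂ (ι → ℂ)) 0 ≤
      LinearMap.ker (M.complexCLM : End ℂ (ι → ℂ)) := by
    rw [← End.eigenspace_zero]
    refine End.maxGenEigenspace_le_eigenspace_of_finrank_le_one _ 0 ?_
    rwa [LinearMap.finrank_maxGenEigenspace_zero_eq, charpoly_complexCLM,
      ← Polynomial.rootMultiplicity_eq_natTrailingDegree']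
  obtain ⟨v, hv, hlim⟩ := exists_mem_ker_tendsto_exp_neg_smul_apply M.complexCLM
    (fun μ hμ => hspec μ <| M.charpoly_complexCLM ▸
      (End.hasEigenvalue_iff_isRoot_charpoly _ _).mp hμ)
    hsemisimple fun i => (Z 0 i : ℂ)
  have hlimc : Tendsto (fun t i => (Z t i : ℂ)) atTop (𝓝 v) := by
    refine (hlim.comp (tendsto_id.atTop_div_const hτ)).congr' ?_
    filter_upwards [eventually_ge_atTop 0] with t ht
    exact (M.ofReal_eq_exp_smul_complexCLM_apply hτ.ne' hZ hZ' ht).symm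
  refine ⟨fun i => (v i).re, M.re_mem_ker_of_mem_ker_complexCLM hv, ?_⟩
  simpa [Function.comp_def] using
    ((continuous_pi fun i => Complex.continuous_re.comp (continuous_apply i)).tendsto v).comp
      hlimc

end Matrix

theorem stmt_0_general (n m : ℕ)
    (τ : ℝ) (hτ : 0 < τ)
    -- the affine vector field given by the right-hand sides of the ODE system:
    (F : (Fin n → ℝ) → (Fin (n + m) → ℝ) → (Fin n ⊕ Fin (n + m)) → ℝ)
    -- `M` and `c` realize the affine system: `F(x,y) = −M(x,y) + c`
    (M : Matrix (Fin n ⊕ Fin (n + m)) (Fin n ⊕ Fin (n + m)) ℝ)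
    (c : (Fin n ⊕ Fin (n + m)) → ℝ)
    (hM : ∀ (x : Fin n → ℝ) (y : Fin (n + m) → ℝ) (k : Fin n ⊕ Fin (n + m)),
      F x y k = -(M.mulVec (Sum.elim x y) k) + c k)
    -- (i) every complex eigenvalue of `M` is `0` or has strictly positive real part
    (heig : ∀ μ : ℂ, (M.charpoly.map (algebraMap ℝ ℂ)).IsRoot μ → μ = 0 ∨ 0 < μ.re)
    -- (ii) `0` is an eigenvalue of algebraic multiplicity one, with eigenspace
    -- spanned by `(0_n, 1_{n+m})`
    (hmult : (M.charpoly.map (algebraMap ℝ ℂ)).rootMultiplicity 0 = 1)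
    (hker : LinearMap.ker M.mulVecLin =
      Submodule.span ℝ
        {(Sum.elim (fun _ => (0 : ℝ)) fun _ => (1 : ℝ) : Fin n ⊕ Fin (n + m) → ℝ)}) :
    -- the `x`-component of steady states is unique
    (∀ (xs xs' : Fin n → ℝ) (ys ys' : Fin (n + m) → ℝ),
        M.mulVec (Sum.elim xs ys) = c → M.mulVec (Sum.elim xs' ys') = c → xs = xs') ∧
    -- and every solution of the ODE system converges in its `x`-components to it
    (∀ (xs : Fin n → ℝ) (ys : Fin (n + m) → ℝ), M.mulVec (Sum.elim xs ys) = c →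
      ∀ (x x' : ℝ → Fin n → ℝ) (y y' : ℝ → Fin (n + m) → ℝ),
        (∀ (i : Fin n) (t : ℝ), 0 ≤ t →
          HasDerivWithinAt (fun s => x s i) (x' t i) (Set.Ici 0) t) →
        (∀ (i : Fin (n + m)) (t : ℝ), 0 ≤ t →
          HasDerivWithinAt (fun s => y s i) (y' t i) (Set.Ici 0) t) →
        (∀ (i : Fin n) (t : ℝ), 0 ≤ t → τ * x' t i = F (x t) (y t) (Sum.inl i)) →
        (∀ (i : Fin (n + m)) (t : ℝ), 0 ≤ t → τ * y' t i = F (x t) (y t) (Sum.inr i)) →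
        ∀ i : Fin n, Tendsto (fun t => x t i) atTop (𝓝 (xs i))) := by
  have hker_inl : ∀ w ∈ LinearMap.ker M.mulVecLin, ∀ i, w (Sum.inl i) = 0 := by
    intro w hw i
    rw [hker] at hw
    obtain ⟨a, rfl⟩ := Submodule.mem_span_singleton.mp hw
    simp
  refine ⟨fun xs xs' ys ys' h h' => funext fun i => ?_, ?_⟩
  · have hw : Sum.elim xs ys - Sum.elim xs' ys' ∈ LinearMap.ker M.mulVecLin := by
      simp [Matrix.mulVec_sub, h, h']
    simpa [sub_eq_zero] using hker_inl _ hw i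
  intro xs ys hs x x' y y' hx hy hx' hy' i
  obtain ⟨w, hw, hlim⟩ := M.exists_mem_ker_tendsto_of_hasDerivWithinAt heig hmult.le hτ
    (Z := fun t => Sum.elim (x t) (y t) - Sum.elim xs ys) (Z' := fun t => Sum.elim (x' t) (y' t))
    (fun t ht => hasDerivWithinAt_pi.mpr fun
      | .inl j => (hx j t ht).sub_const (xs j)
      | .inr j => (hy j t ht).sub_const (ys j))
    (fun t ht => by
      ext (j | j)
      · simpa [Matrix.mulVec_sub, ← hs, hM, neg_add_eq_sub] using hx' j t ht
      · simpa [Matrix.mulVec_sub, ← hs, hM, neg_add_eq_sub] using hy' j t ht)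
  simpa [hker_inl w hw i] using
    (((continuous_apply (Sum.inl i)).tendsto w).comp hlim).add_const (xs i)

/-- distributed dV/dQ index algorithm. Buses are `Fin (n+m)`; load buses are
embedded via `Fin.castAdd m : Fin n → Fin (n+m)` and generator buses via
`Fin.natAdd n : Fin m → Fin (n+m)`. The affine vector field `F` (the right-hand sides of
the ODE system, scaled by `τ`) is written as `F(x,y) = −M(x,y) + c`. Under the spectral
assumptions on `M` and existence of a steady state, the `x`-component of steady states is
unique and every solution of the ODE system satisfies `x_i(t) → x*_i`. -/
theorem stmt_0 (n m : ℕ) (hn : 1 ≤ n) (hm : 1 ≤ m)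
    (G B : Matrix (Fin (n + m)) (Fin (n + m)) ℝ)
    (θ V : Fin (n + m) → ℝ) (hV : ∀ i, 0 < V i)
    (d D : Fin (n + m) → Fin (n + m) → ℝ)
    (hd : ∀ i j, d i j =
      V i * V j * (G i j * Real.sin (θ i - θ j) - B i j * Real.cos (θ i - θ j)))
    (hD : ∀ i j, D i j =
      V i * V j * (G i j * Real.cos (θ i - θ j) + B i j * Real.sin (θ i - θ j)))
    (P Q : Fin (n + m) → ℝ)
    (hP : ∀ i, P i = ∑ j, D i j) (hQ : ∀ i, Q i = ∑ j, d i j)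
    (τ : ℝ) (hτ : 0 < τ)
    -- the affine vector field given by the right-hand sides of the ODE system:
    (F : (Fin n → ℝ) → (Fin (n + m) → ℝ) → (Fin n ⊕ Fin (n + m)) → ℝ)
    (hF1 : ∀ (x : Fin n → ℝ) (y : Fin (n + m) → ℝ) (i : Fin n),
      F x y (Sum.inl i) =
        Q (Fin.castAdd m i) * (1 - x i) - P (Fin.castAdd m i) * y (Fin.castAdd m i)
          - (∑ j : Fin n, d (Fin.castAdd m i) (Fin.castAdd m j) * x j)
          + (∑ j : Fin (n + m), D (Fin.castAdd m i) j * y j))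
    (hF2 : ∀ (x : Fin n → ℝ) (y : Fin (n + m) → ℝ) (i : Fin n),
      F x y (Sum.inr (Fin.castAdd m i)) =
        Q (Fin.castAdd m i) * y (Fin.castAdd m i) - P (Fin.castAdd m i) * x i
          - (∑ j : Fin n, D (Fin.castAdd m i) (Fin.castAdd m j) * x j)
          - (∑ j : Fin (n + m), d (Fin.castAdd m i) j * y j))
    (hF3 : ∀ (x : Fin n → ℝ) (y : Fin (n + m) → ℝ) (i : Fin m),
      F x y (Sum.inr (Fin.natAdd n i)) =
        Q (Fin.natAdd n i) * y (Fin.natAdd n i)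
          - (∑ j : Fin n, D (Fin.natAdd n i) (Fin.castAdd m j) * x j)
          - (∑ j : Fin (n + m), d (Fin.natAdd n i) j * y j))
    -- `M` and `c` realize the affine system: `F(x,y) = −M(x,y) + c`
    (M : Matrix (Fin n ⊕ Fin (n + m)) (Fin n ⊕ Fin (n + m)) ℝ)
    (c : (Fin n ⊕ Fin (n + m)) → ℝ)
    (hM : ∀ (x : Fin n → ℝ) (y : Fin (n + m) → ℝ) (k : Fin n ⊕ Fin (n + m)),
      F x y k = -(M.mulVec (Sum.elim x y) k) + c k)
    -- (i) every complex eigenvalue of `M` is `0` or has strictly positive real part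
    (heig : ∀ μ : ℂ, (M.charpoly.map (algebraMap ℝ ℂ)).IsRoot μ → μ = 0 ∨ 0 < μ.re)
    -- (ii) `0` is an eigenvalue of algebraic multiplicity one, with eigenspace
    -- spanned by `(0_n, 1_{n+m})`
    (hmult : (M.charpoly.map (algebraMap ℝ ℂ)).rootMultiplicity 0 = 1)
    (hker : LinearMap.ker M.mulVecLin =
      Submodule.span ℝ
        {(Sum.elim (fun _ => (0 : ℝ)) fun _ => (1 : ℝ) : Fin n ⊕ Fin (n + m) → ℝ)})
    -- (iii) a steady state exists
    (hex : ∃ (xs : Fin n → ℝ) (ys : Fin (n + m) → ℝ), M.mulVec (Sum.elim xs ys) = c) :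
    -- the `x`-component of steady states is unique
    (∀ (xs xs' : Fin n → ℝ) (ys ys' : Fin (n + m) → ℝ),
        M.mulVec (Sum.elim xs ys) = c → M.mulVec (Sum.elim xs' ys') = c → xs = xs') ∧
    -- and every solution of the ODE system converges in its `x`-components to it
    (∀ (xs : Fin n → ℝ) (ys : Fin (n + m) → ℝ), M.mulVec (Sum.elim xs ys) = c →
      ∀ (x x' : ℝ → Fin n → ℝ) (y y' : ℝ → Fin (n + m) → ℝ),
        (∀ (i : Fin n) (t : ℝ), 0 ≤ t →
          HasDerivWithinAt (fun s => x s i) (x' t i) (Set.Ici 0) t) →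
        (∀ (i : Fin (n + m)) (t : ℝ), 0 ≤ t →
          HasDerivWithinAt (fun s => y s i) (y' t i) (Set.Ici 0) t) →
        (∀ (i : Fin n) (t : ℝ), 0 ≤ t → τ * x' t i = F (x t) (y t) (Sum.inl i)) →
        (∀ (i : Fin (n + m)) (t : ℝ), 0 ≤ t → τ * y' t i = F (x t) (y t) (Sum.inr i)) →
        ∀ i : Fin n, Tendsto (fun t => x t i) atTop (𝓝 (xs i))) :=
  stmt_0_general n m τ hτ F M c hM heig hmult hker
end

section
/- For every k ∈ ℕ and every vertex i ∈ V, the max-consensus iterate satisfies w(k)(i) = max{ w0(j) : j ∈ V, j is reachable from i in Γ, and dist(i, j) ≤ k }, where the maximum is over the (nonempty, since it contains i itself) finite set of such vertices j. -/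
/-! By induction on `k`, `w k i` is the maximum of `w 0` over the closed ball of radius `k` about
`i` in the extended graph metric `edist`. Because that metric is geodesic, the ball of radius
`k + 1` about `i` is the union of the balls of radius `k` about the closed neighbours of `i`, and a
maximum over a finite union is the maximum of the partial maxima. -/

theorem Finset.isGreatest_biUnion_sup' {ι α : Type*} [LinearOrder α] {s : Finset ι}
    (hs : s.Nonempty) {f : ι → α} {S : ι → Set α} (h : ∀ i ∈ s, IsGreatest (S i) (f i)) :
    IsGreatest (⋃ i ∈ s, S i) (s.sup' hs f) := by
  obtain ⟨i, hi, hsup⟩ := s.exists_mem_eq_sup' hs f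
  refine ⟨hsup ▸ Set.mem_biUnion hi (h i hi).1, ?_⟩
  simp only [mem_upperBounds, Set.mem_iUnion₂]
  rintro x ⟨j, hj, hx⟩
  exact ((h j hj).2 hx).trans (s.le_sup' f hj)

namespace SimpleGraph

variable {V : Type*} {G : SimpleGraph V} {u v : V} {k : ℕ}

theorem edist_le_coe_iff_exists_walk : G.edist u v ≤ k ↔ ∃ p : G.Walk u v, p.length ≤ k := by
  refine ⟨fun h ↦ ?_, fun ⟨p, hp⟩ ↦ (edist_le p).trans (by exact_mod_cast hp)⟩
  have hr : G.Reachable u v := edist_ne_top_iff_reachable.mp (ne_top_of_le_ne_top (by simp) h)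
  obtain ⟨p, hp⟩ := hr.exists_walk_length_eq_edist
  exact ⟨p, by rw [← hp] at h; exact_mod_cast h⟩

theorem edist_le_coe_iff : G.edist u v ≤ k ↔ G.Reachable u v ∧ G.dist u v ≤ k := by
  refine ⟨fun h ↦ ?_, fun ⟨hr, hk⟩ ↦ hr.coe_dist_eq_edist ▸ by exact_mod_cast hk⟩
  obtain ⟨p, hp⟩ := edist_le_coe_iff_exists_walk.mp h
  exact ⟨p.reachable, (dist_le p).trans hp⟩

theorem edist_le_succ_iff :
    G.edist u v ≤ k + 1 ↔ ∃ w, G.edist u w ≤ 1 ∧ G.edist w v ≤ k := by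
  constructor
  · intro h
    obtain ⟨p, hp⟩ := edist_le_coe_iff_exists_walk.mp (by exact_mod_cast h)
    cases p with
    | nil => exact ⟨u, by simp, by simp⟩
    | cons hadj q =>
      refine ⟨_, edist_le_one_iff_adj_or_eq.mpr (.inl hadj),
        edist_le_coe_iff_exists_walk.mpr ⟨q, ?_⟩⟩
      simpa using hp
  · rintro ⟨w, huw, hwv⟩
    calc G.edist u v ≤ G.edist u w + G.edist w v := G.edist_triangle
      _ ≤ 1 + k := add_le_add huw hwv
      _ = k + 1 := add_comm _ _

theorem mem_insert_neighborFinset_iff_edist_le_one [DecidableEq V] [G.LocallyFinite] :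
    v ∈ insert u (G.neighborFinset u) ↔ G.edist u v ≤ 1 := by
  rw [edist_le_one_iff_adj_or_eq, Finset.mem_insert, mem_neighborFinset, eq_comm, or_comm]

theorem isGreatest_image_edist_le {α : Type*} [LinearOrder α] [DecidableEq V] [G.LocallyFinite]
    (w : ℕ → V → α)
    (hw : ∀ k i, w (k + 1) i =
      (insert i (G.neighborFinset i)).sup' (Finset.insert_nonempty _ _) (w k))
    (k : ℕ) (i : V) : IsGreatest (w 0 '' {j | G.edist i j ≤ k}) (w k i) := by
  induction k generalizing i with
  | zero =>
    have : {j | G.edist i j ≤ (0 : ℕ)} = {i} := by ext; simp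
    rw [this, Set.image_singleton]
    exact isGreatest_singleton
  | succ k ih =>
    have hball : {j | G.edist i j ≤ (k + 1 : ℕ)} =
        ⋃ a ∈ insert i (G.neighborFinset i), {j | G.edist a j ≤ k} := by
      ext j
      simp only [Set.mem_ofPred_eq, Set.mem_iUnion, Nat.cast_add, Nat.cast_one, edist_le_succ_iff,
        mem_insert_neighborFinset_iff_edist_le_one, exists_prop]
    rw [hball, Set.image_iUnion₂, hw]
    exact Finset.isGreatest_biUnion_sup' _ fun a _ ↦ ih a

end SimpleGraph

theorem stmt_9_general (V : Type*) [Fintype V] [DecidableEq V]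
    (Γ : SimpleGraph V) [DecidableRel Γ.Adj]
    (w0 : V → ℝ) (w : ℕ → V → ℝ)
    (hw0 : w 0 = w0)
    (hwk : ∀ (k : ℕ) (i : V), w (k + 1) i =
      (insert i (Γ.neighborFinset i)).sup' (Finset.insert_nonempty i _) (w k))
    (k : ℕ) (i : V) :
    IsGreatest {x : ℝ | ∃ j : V, Γ.Reachable i j ∧ Γ.dist i j ≤ k ∧ w0 j = x} (w k i) := by
  simpa only [hw0, SimpleGraph.edist_le_coe_iff, Set.image, Set.mem_ofPred_eq, and_assoc] using
    SimpleGraph.isGreatest_image_edist_le w hwk k i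

/-- the max-consensus iterate `w k i` is the maximum of `w0 j` over
the vertices `j` reachable from `i` within graph distance `k`. -/
theorem stmt_9 (V : Type*) [Fintype V] [DecidableEq V] [Nonempty V]
    (Γ : SimpleGraph V) [DecidableRel Γ.Adj]
    (w0 : V → ℝ) (w : ℕ → V → ℝ)
    (hw0 : w 0 = w0)
    (hwk : ∀ (k : ℕ) (i : V), w (k + 1) i =
      (insert i (Γ.neighborFinset i)).sup' (Finset.insert_nonempty i _) (w k))
    (k : ℕ) (i : V) :
    IsGreatest {x : ℝ | ∃ j : V, Γ.Reachable i j ∧ Γ.dist i j ≤ k ∧ w0 j = x} (w k i) :=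
  stmt_9_general V Γ w0 w hw0 hwk k i
end

section
/- Suppose Γ is connected with diameter diam(Γ) (the maximum of dist(i,j) over all vertex pairs). Then for every k ≥ diam(Γ) and every vertex i ∈ V, the max-consensus iterate satisfies w(k)(i) = max_{j ∈ V} w0(j). -/
/-- if `Γ` is connected with diameter `diamΓ` (the maximum of the pairwise
graph distances), then for every `k ≥ diamΓ` and every vertex `i`, the max-consensus
iterate satisfies `w k i = max_{j} w0 j`. -/
theorem stmt_10 (V : Type*) [Fintype V] [DecidableEq V] [Nonempty V]
    (Γ : SimpleGraph V) [DecidableRel Γ.Adj]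
    (hconn : Γ.Connected)
    (diamΓ : ℕ) (hdiam : IsGreatest {d : ℕ | ∃ i j : V, Γ.dist i j = d} diamΓ)
    (w0 : V → ℝ) (w : ℕ → V → ℝ)
    (hw0 : w 0 = w0)
    (hwk : ∀ (k : ℕ) (i : V), w (k + 1) i =
      (insert i (Γ.neighborFinset i)).sup' (Finset.insert_nonempty i _) (w k))
    (k : ℕ) (hk : diamΓ ≤ k) (i : V) :
    w k i = Finset.univ.sup' Finset.univ_nonempty w0 := by
  -- monotonicity in k at a fixed vertex
  have hmono : ∀ (k : ℕ) (i : V), w k i ≤ w (k + 1) i := by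
    intro k i
    rw [hwk]
    exact Finset.le_sup' (w k) (Finset.mem_insert_self i _)
  have hself : ∀ (k : ℕ) (i : V), w0 i ≤ w k i := by
    intro k i
    induction k with
    | zero => rw [hw0]
    | succ n ih => exact ih.trans (hmono n i)
  -- upper bound
  have hub : ∀ (k : ℕ) (i : V), w k i ≤ Finset.univ.sup' Finset.univ_nonempty w0 := by
    intro k
    induction k with
    | zero => intro i; rw [hw0]; exact Finset.le_sup' w0 (Finset.mem_univ i)
    | succ n ih =>
      intro i
      rw [hwk]
      exact Finset.sup'_le _ _ fun j _ => ih j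
  -- lower bound along walks
  have hwalk : ∀ (k : ℕ) (i j : V) (p : Γ.Walk i j), p.length ≤ k → w0 j ≤ w k i := by
    intro k
    induction k with
    | zero =>
      intro i j p hp
      have : i = j := p.eq_of_length_eq_zero (Nat.le_zero.mp hp)
      subst this
      rw [hw0]
    | succ n ih =>
      intro i j p hp
      cases p with
      | nil => exact hself _ _
      | cons h q =>
        have hq : q.length ≤ n := by
          simpa [SimpleGraph.Walk.length_cons, Nat.succ_le_succ_iff] using hp
        calc w0 j ≤ w n _ := ih _ _ q hq
          _ ≤ w (n + 1) i := by
            rw [hwk]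
            exact Finset.le_sup' (w n)
              (Finset.mem_insert_of_mem ((Γ.mem_neighborFinset i _).mpr h))
  refine le_antisymm (hub k i) (Finset.sup'_le _ _ fun j _ => ?_)
  obtain ⟨p, hp⟩ := (hconn i j).exists_walk_length_eq_dist
  refine hwalk k i j p ?_
  rw [hp]
  exact le_trans (hdiam.2 ⟨i, j, rfl⟩) hk
end
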